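/- Let τ ⊆ {1,…,n} be a subset such that rank(A_τ) = d and A_τ is pointed (there exists c₀ ∈ ℝ^d with ⟨c₀, a_j⟩ > 0 for all j ∈ τ). Let w₀ ∈ ℝ^τ be such that T_{w₀} is a regular triangulation of A_τ. Then there exists w ∈ ℝ^n such that T_w is a regular triangulation of A and every facet of T_{w₀} is a facet of T_w. -/

import Mathlib

/-!
Keep `w = w₀` on `τ` and give the columns outside `τ` large, generic heights. Large heights keep
every facet of `T_{w₀}` a facet of `T_w`, with the same linear functional as witness. A linear
relation among the columns of a cell `s` of `T_w` cannot involve a column outside `τ` (this is the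
genericity), and a relation among the columns in `τ` is a relation in the cell `s ∩ τ` of `T_{w₀}`,
which is a face of a simplicial facet; so all facets of `T_w` are simplicial. They cover `pos(A)`
by LP duality: a point `z` of `pos(A)` outside every proper column span lies in the cone over the
columns where an optimal solution `c` of `max ⟨c, z⟩` subject to `⟨c, a_j⟩ ≤ w_j` is tight (the
functional of any facet of `T_{w₀}` is feasible), and such points are dense in `pos(A)`.
-/

open Matrix

/-- The cone of nonnegative real combinations of the columns `a_j`, `j ∈ τ`. -/
def posCone {d n : ℕ} (A : Matrix (Fin d) (Fin n) ℤ) (τ : Finset (Fin n)) :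
    Set (Fin d → ℝ) :=
  {x | ∃ lam : Fin n → ℝ, (∀ j, 0 ≤ lam j) ∧ x = fun i => ∑ j ∈ τ, lam j * (A i j : ℝ)}

/-- `s ∈ T_{w}` computed with respect to the submatrix `A_τ` (only the
coordinates of `w` indexed by `τ` are relevant). -/
def memTwRel {d n : ℕ} (A : Matrix (Fin d) (Fin n) ℤ) (τ : Finset (Fin n))
    (w : Fin n → ℝ) (s : Finset (Fin n)) : Prop :=
  s ⊆ τ ∧ ∃ c : Fin d → ℝ, (∀ j ∈ s, (∑ i, c i * (A i j : ℝ)) = w j) ∧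
    ∀ j ∈ τ, j ∉ s → (∑ i, c i * (A i j : ℝ)) < w j

/-- `s` is a facet of `T_w` (with respect to `A_τ`): `s ∈ T_w` and `rank A_s = d`,
i.e. the columns indexed by `s` span `ℝ^d`. -/
def isFacetRel {d n : ℕ} (A : Matrix (Fin d) (Fin n) ℤ) (τ : Finset (Fin n))
    (w : Fin n → ℝ) (s : Finset (Fin n)) : Prop :=
  memTwRel A τ w s ∧
    Submodule.span ℝ (Set.range fun j : {j // j ∈ s} => fun i => (A i j.1 : ℝ)) = ⊤

/-- `T_w` is a regular triangulation of `A_τ`: every facet `s` satisfies `|s| = d`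
and `det A_s ≠ 0` (equivalently, its columns are linearly independent), and
`pos(A_τ) = ⋃_{s facet} pos(s)`. -/
def isRegTriangRel {d n : ℕ} (A : Matrix (Fin d) (Fin n) ℤ) (τ : Finset (Fin n))
    (w : Fin n → ℝ) : Prop :=
  (∀ s : Finset (Fin n), isFacetRel A τ w s → s.card = d ∧
      LinearIndependent ℝ (fun j : {j // j ∈ s} => fun i => (A i j.1 : ℝ))) ∧
    posCone A τ = ⋃ s ∈ {s : Finset (Fin n) | isFacetRel A τ w s}, posCone A s

theorem eq_of_sum_mul_le_sum_mul {ι : Type*} {t : Finset ι} {lam x y : ι → ℝ}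
    (hlam : ∀ j ∈ t, 0 ≤ lam j) (hxy : ∀ j ∈ t, x j ≤ y j)
    (h : ∑ j ∈ t, lam j * y j ≤ ∑ j ∈ t, lam j * x j) {j : ι} (hj : j ∈ t) (hj0 : lam j ≠ 0) :
    x j = y j := by
  have hle : ∀ i ∈ t, lam i * x i ≤ lam i * y i := fun i hi =>
    mul_le_mul_of_nonneg_left (hxy i hi) (hlam i hi)
  exact mul_left_cancel₀ hj0
    ((Finset.sum_eq_sum_iff_of_le hle).1 (le_antisymm (Finset.sum_le_sum hle) h) j hj)

theorem isOpen_setOf_forall_lt {ι : Type*} [Finite ι] (B : ι → ℝ) :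
    IsOpen {u : ι → ℝ | ∀ j, B j < u j} := by
  simp only [Set.ofPred_forall]
  exact isOpen_iInter_of_finite fun j => isOpen_lt continuous_const (continuous_apply j)

section PosHull

variable {ι E : Type*}

def posHull [AddCommMonoid E] [Module ℝ E] (v : ι → E) (t : Finset ι) : Set E :=
  {x | ∃ lam : ι → ℝ, (∀ j ∈ t, 0 ≤ lam j) ∧ ∑ j ∈ t, lam j • v j = x}

section Algebraic

variable [AddCommGroup E] [Module ℝ E] {v : ι → E} {s t : Finset ι} {x y : E}

theorem posHull_mono (h : s ⊆ t) : posHull v s ⊆ posHull v t := by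
  classical
  rintro x ⟨lam, hlam, rfl⟩
  refine ⟨fun j => if j ∈ s then lam j else 0, fun j _ => ?_, ?_⟩
  · dsimp only
    split_ifs with hj
    exacts [hlam j hj, le_rfl]
  · rw [← Finset.sum_subset h fun j _ hj => by simp [hj]]
    exact Finset.sum_congr rfl fun j hj => by simp [hj]

theorem zero_mem_posHull : (0 : E) ∈ posHull v t :=
  ⟨0, fun _ _ => le_rfl, by simp⟩

theorem smul_mem_posHull {c : ℝ} (hc : 0 ≤ c) (hx : x ∈ posHull v t) : c • x ∈ posHull v t := by
  obtain ⟨lam, hlam, rfl⟩ := hx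
  exact ⟨c • lam, fun j hj => mul_nonneg hc (hlam j hj), by simp [Finset.smul_sum, smul_smul]⟩

theorem add_mem_posHull (hx : x ∈ posHull v t) (hy : y ∈ posHull v t) :
    x + y ∈ posHull v t := by
  obtain ⟨lam, hlam, rfl⟩ := hx
  obtain ⟨mu, hmu, rfl⟩ := hy
  exact ⟨lam + mu, fun j hj => add_nonneg (hlam j hj) (hmu j hj),
    by simp [add_smul, Finset.sum_add_distrib]⟩

theorem convex_posHull : Convex ℝ (posHull v t) := fun _ hx _ hy _ _ ha hb _ =>
  add_mem_posHull (smul_mem_posHull ha hx) (smul_mem_posHull hb hy)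

theorem mem_posHull_of_mem {j : ι} (hj : j ∈ t) : v j ∈ posHull v t := by
  classical
  refine ⟨Pi.single j 1, fun k _ => by rw [Pi.single_apply]; positivity, ?_⟩
  rw [Finset.sum_eq_single_of_mem j hj fun k _ hk => by simp [hk]]
  simp

theorem posHull_subset_span (v : ι → E) (t : Finset ι) :
    posHull v t ⊆ Submodule.span ℝ (v '' t) := by
  rintro _ ⟨lam, -, rfl⟩
  exact Submodule.sum_mem _ fun j hj => Submodule.smul_mem _ _ (Submodule.subset_span ⟨j, hj, rfl⟩)

/-- One step of Carathéodory's theorem for cones. -/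
theorem exists_mem_posHull_erase [DecidableEq ι] {f : ι → ℝ} (hf : ∑ j ∈ t, f j • v j = 0)
    {i : ι} (hi : i ∈ t) (hfi : 0 < f i) (hx : x ∈ posHull v t) :
    ∃ j ∈ t, x ∈ posHull v (t.erase j) := by
  obtain ⟨lam, hlam, rfl⟩ := hx
  obtain ⟨j₀, hj₀, hmin⟩ := (t.filter (0 < f ·)).exists_min_image (fun j => lam j / f j)
    ⟨i, Finset.mem_filter.2 ⟨hi, hfi⟩⟩
  rw [Finset.mem_filter] at hj₀
  set θ := lam j₀ / f j₀
  have hθ : 0 ≤ θ := div_nonneg (hlam j₀ hj₀.1) hj₀.2.le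
  have hnonneg : ∀ j ∈ t, 0 ≤ lam j - θ * f j := fun j hj => by
    rcases le_or_gt (f j) 0 with hfj | hfj
    · nlinarith [hlam j hj]
    · have := hmin j (Finset.mem_filter.2 ⟨hj, hfj⟩)
      rw [le_div_iff₀ hfj] at this
      linarith
  have hzero : lam j₀ - θ * f j₀ = 0 := by
    simp only [θ, div_mul_cancel₀ _ hj₀.2.ne', sub_self]
  refine ⟨j₀, hj₀.1, fun j => lam j - θ * f j,
    fun j hj => hnonneg j (Finset.mem_of_mem_erase hj), ?_⟩
  rw [Finset.sum_erase _ (by simp only [hzero, zero_smul])]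
  simp only [sub_smul, Finset.sum_sub_distrib, mul_smul, ← Finset.smul_sum, hf, smul_zero,
    sub_zero]

/-- Carathéodory's theorem for cones. -/
theorem exists_linearIndepOn_of_mem_posHull [DecidableEq ι] (hx : x ∈ posHull v t) :
    ∃ s ⊆ t, LinearIndepOn ℝ v (s : Set ι) ∧ x ∈ posHull v s := by
  induction t using Finset.strongInduction with
  | H t ih =>
    by_cases hind : LinearIndepOn ℝ v (t : Set ι)
    · exact ⟨t, subset_rfl, hind, hx⟩
    obtain ⟨f, hf, i, hi, hfi⟩ := not_linearIndepOn_finset_iff.1 hind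
    obtain ⟨j, hj, hxj⟩ : ∃ j ∈ t, x ∈ posHull v (t.erase j) := by
      rcases hfi.lt_or_gt with hneg | hpos
      · refine exists_mem_posHull_erase (f := -f) ?_ hi (by simpa using hneg) hx
        simp [neg_smul, hf]
      · exact exists_mem_posHull_erase hf hi hpos hx
    obtain ⟨s, hs, hsind, hxs⟩ := ih _ (Finset.erase_ssubset hj) hxj
    exact ⟨s, hs.trans (Finset.erase_subset _ _), hsind, hxs⟩

end Algebraic

section Topological

variable [NormedAddCommGroup E] [NormedSpace ℝ E] {v : ι → E} {s t : Finset ι} {x : E}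

theorem posHull_eq_image_linearCombination (s : Finset ι) :
    posHull v s = Fintype.linearCombination ℝ (fun j : s => v j) '' {μ | ∀ j, 0 ≤ μ j} := by
  classical
  ext x
  constructor
  · rintro ⟨lam, hlam, rfl⟩
    refine ⟨fun j => lam j, fun j => hlam j j.2, ?_⟩
    rw [Fintype.linearCombination_apply, ← Finset.sum_coe_sort s]
  · rintro ⟨μ, hμ, rfl⟩
    refine ⟨fun j => if h : j ∈ s then μ ⟨j, h⟩ else 0, fun j hj => by simpa [hj] using hμ _, ?_⟩
    rw [Fintype.linearCombination_apply, ← Finset.sum_coe_sort s]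
    exact Finset.sum_congr rfl fun j _ => by simp

theorem isClosed_posHull_of_linearIndepOn (h : LinearIndepOn ℝ v (s : Set ι)) :
    IsClosed (posHull v s) := by
  rw [posHull_eq_image_linearCombination]
  have hinj : LinearMap.ker (Fintype.linearCombination ℝ (fun j : s => v j)) = ⊥ :=
    LinearMap.ker_eq_bot.2 h.fintypeLinearCombination_injective
  refine (LinearMap.isClosedEmbedding_of_injective hinj).isClosedMap _ ?_
  simp only [Set.ofPred_forall]
  exact isClosed_iInter fun j => isClosed_le continuous_const (continuous_apply j)

theorem isClosed_posHull (v : ι → E) (t : Finset ι) : IsClosed (posHull v t) := by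
  classical
  have : posHull v t = ⋃ (s : Finset ι) (_ : s ∈ t.powerset.filter
      (fun s : Finset ι => LinearIndepOn ℝ v (s : Set ι))), posHull v s := by
    refine subset_antisymm (fun x hx => ?_) (Set.iUnion₂_subset fun s hs => ?_)
    · obtain ⟨s, hst, hind, hxs⟩ := exists_linearIndepOn_of_mem_posHull hx
      exact Set.mem_biUnion (Finset.mem_filter.2 ⟨Finset.mem_powerset.2 hst, hind⟩) hxs
    · exact posHull_mono (Finset.mem_powerset.1 (Finset.mem_filter.1 hs).1)
  rw [this]
  exact isClosed_biUnion_finset fun s hs =>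
    isClosed_posHull_of_linearIndepOn (Finset.mem_filter.1 hs).2

/-- Farkas' lemma. -/
theorem exists_dual_nonpos_of_notMem_posHull {q : E} (hq : q ∉ posHull v t) :
    ∃ f : E →L[ℝ] ℝ, (∀ j ∈ t, f (v j) ≤ 0) ∧ 0 < f q := by
  obtain ⟨f, u, hfu, hfq⟩ :=
    geometric_hahn_banach_closed_point convex_posHull (isClosed_posHull v t) hq
  have hu : 0 < u := by simpa using hfu 0 zero_mem_posHull
  refine ⟨f, fun j hj => ?_, hu.trans hfq⟩
  by_contra! hpos
  have := hfu _ (smul_mem_posHull (div_pos hu hpos).le (mem_posHull_of_mem hj))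
  rw [map_smul, smul_eq_mul, div_mul_cancel₀ _ hpos.ne'] at this
  exact this.false

theorem map_nonpos_of_mem_posHull {f : E →L[ℝ] ℝ} (hf : ∀ j ∈ t, f (v j) ≤ 0)
    (hx : x ∈ posHull v t) : f x ≤ 0 := by
  obtain ⟨lam, hlam, rfl⟩ := hx
  simp only [map_sum, map_smul, smul_eq_mul]
  exact Finset.sum_nonpos fun j hj => mul_nonpos_of_nonneg_of_nonpos (hlam j hj) (hf j hj)

theorem exists_supporting_dual [Fintype ι] {p q : E} (hp : p ∈ posHull v Finset.univ)
    (hq : ∀ ε : ℝ, 0 < ε → p + ε • q ∉ posHull v Finset.univ) :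
    ∃ f : E →L[ℝ] ℝ, (∀ j, f (v j) ≤ 0) ∧ f p = 0 ∧ 0 < f q := by
  let v' : Option ι → E := fun o => o.elim (-p) v
  have hq' : q ∉ posHull v' Finset.univ := by
    rintro ⟨μ, hμ, hsum⟩
    rw [Fintype.sum_option] at hsum
    set m := μ none
    have hm : 0 ≤ m := hμ none (Finset.mem_univ _)
    have hS : ∑ j, μ (some j) • v j ∈ posHull v Finset.univ :=
      ⟨fun j => μ (some j), fun j _ => hμ (some j) (Finset.mem_univ _), rfl⟩
    refine hq (m + 1)⁻¹ (by positivity) ?_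
    have : p + (m + 1)⁻¹ • q = (m + 1)⁻¹ • (∑ j, μ (some j) • v j + p) := by
      have hp1 : p = ((m + 1)⁻¹ * (m + 1)) • p := by
        rw [inv_mul_cancel₀ (by positivity), one_smul]
      rw [← hsum]
      nth_rewrite 1 [hp1]
      simp only [v', Option.elim]
      module
    rw [this]
    exact smul_mem_posHull (by positivity) (add_mem_posHull hS hp)
  obtain ⟨f, hf, hfq⟩ := exists_dual_nonpos_of_notMem_posHull hq'
  have hfv : ∀ j, f (v j) ≤ 0 := fun j => hf (some j) (Finset.mem_univ _)
  have hfp : 0 ≤ f p := by simpa [v'] using hf none (Finset.mem_univ _)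
  exact ⟨f, hfv, le_antisymm (map_nonpos_of_mem_posHull (fun j _ => hfv j) hp) hfp, hfq⟩

theorem mem_posHull_prod_iff {a : ι → E} {w : ι → ℝ} {y : E} {r : ℝ} :
    (y, r) ∈ posHull (fun j => (a j, w j)) t ↔
      ∃ lam : ι → ℝ, (∀ j ∈ t, 0 ≤ lam j) ∧
        ∑ j ∈ t, lam j • a j = y ∧ ∑ j ∈ t, lam j * w j = r := by
  simp only [posHull, Set.mem_ofPred_eq, Prod.ext_iff, Prod.fst_sum, Prod.snd_sum, Prod.smul_fst,
    Prod.smul_snd, smul_eq_mul]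

theorem exists_isLeast_height [Fintype ι] (a : ι → E) (w : ι → ℝ) {φ₀ : E →ₗ[ℝ] ℝ}
    (hφ₀ : ∀ j, φ₀ (a j) ≤ w j) {z : E} (hz : z ∈ posHull a Finset.univ) :
    ∃ h, IsLeast {r | (z, r) ∈ posHull (fun j => (a j, w j)) Finset.univ} h := by
  set R := {r | (z, r) ∈ posHull (fun j => (a j, w j)) Finset.univ}
  have hne : R.Nonempty := by
    obtain ⟨lam, hlam, hz⟩ := hz
    exact ⟨_, mem_posHull_prod_iff.2 ⟨lam, hlam, hz, rfl⟩⟩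
  have hbdd : BddBelow R := ⟨φ₀ z, fun r hr => by
    obtain ⟨μ, hμ, rfl, rfl⟩ := mem_posHull_prod_iff.1 hr
    rw [map_sum]
    exact Finset.sum_le_sum fun j hj => by
      rw [map_smul, smul_eq_mul]; exact mul_le_mul_of_nonneg_left (hφ₀ j) (hμ j hj)⟩
  have hclosed : IsClosed R :=
    (isClosed_posHull _ _).preimage (continuous_const.prodMk continuous_id)
  exact ⟨_, hclosed.csInf_mem hne hbdd, fun r hr => csInf_le hbdd hr⟩

/-- Strong duality for the linear program `min ∑ lam j * w j` subject to `∑ lam j • a j = z`,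
`lam ≥ 0`, whose dual is `max φ z` subject to `φ (a j) ≤ w j`. -/
theorem exists_dual_eq_of_mem_posHull [Fintype ι] (a : ι → E) (w : ι → ℝ) {φ₀ : E →ₗ[ℝ] ℝ}
    (hφ₀ : ∀ j, φ₀ (a j) ≤ w j) {z : E} (hz : z ∈ posHull a Finset.univ) :
    ∃ φ : E →ₗ[ℝ] ℝ, (∀ j, φ (a j) ≤ w j) ∧ ∃ lam : ι → ℝ, (∀ j, 0 ≤ lam j) ∧
      ∑ j, lam j • a j = z ∧ ∑ j, lam j * w j = φ z := by
  obtain ⟨h, hmem, hmin⟩ := exists_isLeast_height a w hφ₀ hz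
  obtain ⟨f, hf, hfzh, hγ⟩ := exists_supporting_dual (q := ((0 : E), (-1 : ℝ))) hmem
    fun ε hε hlt => by
      have : h ≤ h - ε := hmin (by simpa [sub_eq_add_neg] using hlt)
      linarith
  set γ := f (0, -1)
  have hsplit : ∀ y r, f (y, r) = f (y, 0) - r * γ := fun y r => by
    have : ((y, r) : E × ℝ) = (y, 0) + (-r) • ((0 : E), (-1 : ℝ)) := by ext <;> simp
    rw [this, map_add, map_smul, smul_eq_mul]
    ring
  refine ⟨γ⁻¹ • ((f : E × ℝ →ₗ[ℝ] ℝ) ∘ₗ LinearMap.inl ℝ E ℝ), fun j => ?_, ?_⟩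
  · have := hf j
    rw [hsplit] at this
    simp only [LinearMap.smul_apply, LinearMap.comp_apply, LinearMap.inl_apply,
      ContinuousLinearMap.coe_coe, smul_eq_mul]
    rw [inv_mul_le_iff₀ hγ]
    linarith
  · obtain ⟨lam, hlam, hz, hh⟩ := mem_posHull_prod_iff.1 hmem
    refine ⟨lam, fun j => hlam j (Finset.mem_univ j), hz, ?_⟩
    rw [hsplit] at hfzh
    simp only [LinearMap.smul_apply, LinearMap.comp_apply, LinearMap.inl_apply,
      ContinuousLinearMap.coe_coe, smul_eq_mul]
    rw [hh, eq_inv_mul_iff_mul_eq₀ hγ.ne']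
    linarith

theorem interior_posHull_nonempty [Fintype ι] [FiniteDimensional ℝ E]
    (hv : Submodule.span ℝ (Set.range v) = ⊤) : (interior (posHull v Finset.univ)).Nonempty := by
  set L := Fintype.linearCombination ℝ v
  have hL : Function.Surjective L := by
    rw [← LinearMap.range_eq_top, Fintype.range_linearCombination, hv]
  have hopen : IsOpen (L '' {μ | ∀ j, 0 < μ j}) :=
    L.isOpenMap_of_finiteDimensional hL _ (isOpen_setOf_forall_lt 0)
  refine ⟨L 1, interior_maximal ?_ hopen ⟨1, fun _ => one_pos, rfl⟩⟩
  rintro _ ⟨μ, hμ, rfl⟩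
  exact ⟨μ, fun j _ => (hμ j).le, (Fintype.linearCombination_apply ℝ v μ).symm⟩

end Topological

end PosHull

theorem Convex.subset_closure_inter_of_dense {E : Type*} [AddCommGroup E] [Module ℝ E]
    [TopologicalSpace E] [IsTopologicalAddGroup E] [ContinuousSMul ℝ E] {C D : Set E}
    (hC : Convex ℝ C) (hint : (interior C).Nonempty) (hD : Dense D) : C ⊆ closure (C ∩ D) := by
  calc C ⊆ closure (interior C) := by
        rw [hC.closure_interior_eq_closure_of_nonempty_interior hint]; exact subset_closure
    _ ⊆ closure (closure (interior C ∩ D)) :=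
        closure_mono (hD.open_subset_closure_inter isOpen_interior)
    _ ⊆ closure (C ∩ D) := by
        rw [closure_closure]
        exact closure_mono (Set.inter_subset_inter_left _ interior_subset)

section Hyperplanes

variable {κ E : Type*} [NormedAddCommGroup E] [NormedSpace ℝ E] [FiniteDimensional ℝ E]

open MeasureTheory

theorem dense_setOf_forall_apply_ne [Countable κ] (f : κ → E →ₗ[ℝ] ℝ) (hf : ∀ i, f i ≠ 0)
    (c : κ → ℝ) : Dense {x | ∀ i, f i x ≠ c i} := by
  borelize E
  refine (Measure.addHaar (G := E)).dense_of_ae (ae_all_iff.2 fun i => ?_)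
  have hc : ∀ᵐ y ∂(volume : Measure ℝ), y ∈ ({c i}ᶜ : Set ℝ) :=
    measure_eq_zero_iff_ae_notMem.1 Real.volume_singleton
  exact (ae_comp_linearMap_mem_iff (μ := Measure.addHaar) (ν := volume)
    (L := f i) (LinearMap.surjective_of_ne_zero (hf i)) (measurableSet_singleton _).compl).2 hc

theorem dense_setOf_forall_notMem [Countable κ] (p : κ → Submodule ℝ E) (hp : ∀ i, p i ≠ ⊤) :
    Dense {x | ∀ i, x ∉ p i} := by
  choose f hf hpf using fun i => (p i).exists_le_ker_of_lt_top (hp i).lt_top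
  exact (dense_setOf_forall_apply_ne f hf 0).mono fun x (hx : ∀ i, f i x ≠ 0) i hxi =>
    hx i (hpf i hxi)

end Hyperplanes

section Triangulation

variable {d n : ℕ} {A : Matrix (Fin d) (Fin n) ℤ} {τ s : Finset (Fin n)} {w w₀ : Fin n → ℝ}

def realCol (A : Matrix (Fin d) (Fin n) ℤ) (j : Fin n) : Fin d → ℝ := fun i => (A i j : ℝ)

theorem memTwRel_iff : memTwRel A τ w s ↔ s ⊆ τ ∧ ∃ c : Fin d → ℝ,
    (∀ j ∈ s, c ⬝ᵥ realCol A j = w j) ∧ ∀ j ∈ τ, j ∉ s → c ⬝ᵥ realCol A j < w j := Iff.rfl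

theorem isFacetRel_iff : isFacetRel A τ w s ↔
    memTwRel A τ w s ∧ Submodule.span ℝ (realCol A '' s) = ⊤ := by
  rw [Set.image_eq_range]; rfl

theorem posCone_eq_posHull (A : Matrix (Fin d) (Fin n) ℤ) (τ : Finset (Fin n)) :
    posCone A τ = posHull (realCol A) τ := by
  ext x
  constructor
  · rintro ⟨lam, hlam, rfl⟩
    refine ⟨lam, fun j _ => hlam j, ?_⟩
    ext i
    simp [realCol, Finset.sum_apply]
  · rintro ⟨lam, hlam, rfl⟩
    refine ⟨fun j => if j ∈ τ then lam j else 0, fun j => ?_, ?_⟩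
    · dsimp only
      split_ifs with hj
      exacts [hlam j hj, le_rfl]
    · ext i
      simp only [Finset.sum_apply, Pi.smul_apply, smul_eq_mul, realCol]
      exact Finset.sum_congr rfl fun j hj => by rw [if_pos hj, mul_comm]

theorem dotProduct_realCol_le {c : Fin d → ℝ} (heq : ∀ j ∈ s, c ⬝ᵥ realCol A j = w j)
    (hlt : ∀ j ∈ τ, j ∉ s → c ⬝ᵥ realCol A j < w j) {j : Fin n} (hj : j ∈ τ) :
    c ⬝ᵥ realCol A j ≤ w j := by
  by_cases hjs : j ∈ s
  exacts [(heq j hjs).le, (hlt j hj hjs).le]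

theorem dotProduct_sum_smul_realCol (c : Fin d → ℝ) (t : Finset (Fin n)) (lam : Fin n → ℝ) :
    c ⬝ᵥ ∑ j ∈ t, lam j • realCol A j = ∑ j ∈ t, lam j * (c ⬝ᵥ realCol A j) := by
  simp only [dotProduct_sum, dotProduct_smul, smul_eq_mul]

theorem isRegTriangRel.exists_isFacetRel (h : isRegTriangRel A τ w) :
    ∃ σ, isFacetRel A τ w σ := by
  have h0 : (0 : Fin d → ℝ) ∈ posCone A τ := by
    rw [posCone_eq_posHull]; exact zero_mem_posHull
  rw [h.2] at h0
  obtain ⟨σ, hσ, -⟩ := Set.mem_iUnion₂.1 h0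
  exact ⟨σ, hσ⟩

theorem isRegTriangRel.exists_isFacetRel_superset (h : isRegTriangRel A τ w)
    (hs : memTwRel A τ w s) : ∃ σ, isFacetRel A τ w σ ∧ s ⊆ σ := by
  obtain ⟨hsτ, c, hceq, hclt⟩ := memTwRel_iff.1 hs
  have hy : ∑ j ∈ s, (1 : ℝ) • realCol A j ∈ posCone A τ := by
    rw [posCone_eq_posHull]; exact posHull_mono hsτ ⟨1, fun _ _ => zero_le_one, rfl⟩
  rw [h.2] at hy
  obtain ⟨σ, hσ, hyσ⟩ := Set.mem_iUnion₂.1 hy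
  obtain ⟨hστ, cσ, hσeq, hσlt⟩ := memTwRel_iff.1 hσ.1
  rw [posCone_eq_posHull] at hyσ
  obtain ⟨μ, hμ, hμy⟩ := hyσ
  -- Comparing the heights of the point `∑_{j ∈ s} a_j` seen from `c` and from `cσ`.
  have hheight : ∑ j ∈ s, 1 * w j ≤ ∑ j ∈ s, 1 * (cσ ⬝ᵥ realCol A j) := by
    calc ∑ j ∈ s, 1 * w j = c ⬝ᵥ ∑ j ∈ σ, μ j • realCol A j := by
          rw [hμy, dotProduct_sum_smul_realCol]
          exact Finset.sum_congr rfl fun j hj => by rw [hceq j hj]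
      _ ≤ ∑ j ∈ σ, μ j * w j := by
          rw [dotProduct_sum_smul_realCol]
          exact Finset.sum_le_sum fun j hj => mul_le_mul_of_nonneg_left
            (dotProduct_realCol_le hceq hclt (hστ hj)) (hμ j hj)
      _ = cσ ⬝ᵥ ∑ j ∈ σ, μ j • realCol A j := by
          rw [dotProduct_sum_smul_realCol]
          exact Finset.sum_congr rfl fun j hj => by rw [hσeq j hj]
      _ = ∑ j ∈ s, 1 * (cσ ⬝ᵥ realCol A j) := by rw [hμy, dotProduct_sum_smul_realCol]
  refine ⟨σ, hσ, fun j hj => ?_⟩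
  by_contra hjσ
  have := eq_of_sum_mul_le_sum_mul (fun _ _ => zero_le_one)
    (fun i hi => dotProduct_realCol_le hσeq hσlt (hsτ hi)) hheight hj one_ne_zero
  exact (hσlt j (hsτ hj) hjσ).ne this

theorem isRegTriangRel.linearIndepOn (h : isRegTriangRel A τ w) (hs : memTwRel A τ w s) :
    LinearIndepOn ℝ (realCol A) (s : Set (Fin n)) := by
  obtain ⟨σ, hσ, hsσ⟩ := h.exists_isFacetRel_superset hs
  exact LinearIndepOn.mono (s := (σ : Set (Fin n))) (h.1 σ hσ).2 (Finset.coe_subset.2 hsσ)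

theorem card_eq_of_isFacetRel (hs : isFacetRel A τ w s)
    (hind : LinearIndepOn ℝ (realCol A) (s : Set (Fin n))) : s.card = d := by
  have := finrank_span_eq_card hind
  rw [← Set.image_eq_range, (isFacetRel_iff.1 hs).2, finrank_top, Module.finrank_fin_fun] at this
  simpa using this.symm

theorem exists_isFacetRel_of_generic (hlow : ∃ c : Fin d → ℝ, ∀ j, c ⬝ᵥ realCol A j ≤ w j)
    {z : Fin d → ℝ} (hz : z ∈ posCone A Finset.univ)
    (hgen : ∀ s : Finset (Fin n), z ∈ Submodule.span ℝ (realCol A '' s) →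
      Submodule.span ℝ (realCol A '' s) = ⊤) :
    ∃ s, isFacetRel A Finset.univ w s ∧ z ∈ posCone A s := by
  classical
  obtain ⟨c₀, hc₀⟩ := hlow
  rw [posCone_eq_posHull] at hz
  obtain ⟨φ, hφ, lam, hlam, rfl, hopt⟩ := exists_dual_eq_of_mem_posHull (realCol A) w
    (φ₀ := dotProductEquiv ℝ (Fin d) c₀) (by simpa using hc₀) hz
  set c := (dotProductEquiv ℝ (Fin d)).symm φ
  have hφc : ∀ y, φ y = c ⬝ᵥ y := fun y => by
    rw [← dotProductEquiv_apply_apply ℝ, LinearEquiv.apply_symm_apply]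
  set s := Finset.univ.filter fun j => c ⬝ᵥ realCol A j = w j
  have hle : ∀ j, c ⬝ᵥ realCol A j ≤ w j := fun j => hφc _ ▸ hφ j
  have htight : ∀ j, lam j ≠ 0 → j ∈ s := fun j hj => Finset.mem_filter.2 ⟨Finset.mem_univ j,
    eq_of_sum_mul_le_sum_mul (fun j _ => hlam j) (fun j _ => hle j)
      (by rw [hopt, hφc, dotProduct_sum_smul_realCol]) (Finset.mem_univ j) hj⟩
  have hzs : ∑ j, lam j • realCol A j ∈ posCone A s := by
    rw [posCone_eq_posHull, ← Finset.sum_subset (Finset.subset_univ s) fun j _ hj => by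
      rw [not_imp_comm.1 (htight j) hj, zero_smul]]
    exact ⟨lam, fun j _ => hlam j, rfl⟩
  refine ⟨s, isFacetRel_iff.2 ⟨⟨Finset.subset_univ s, c, fun j hj => (Finset.mem_filter.1 hj).2,
    fun j _ hj => (hle j).lt_of_ne fun h => hj (Finset.mem_filter.2 ⟨Finset.mem_univ j, h⟩)⟩,
    hgen s (posHull_subset_span _ _ (posCone_eq_posHull A s ▸ hzs))⟩, hzs⟩

/-- The points of `pos(A)` outside the finitely many proper column spans are covered
(`exists_isFacetRel_of_generic`), they are dense, and the union of the facet cones is closed. -/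
theorem posCone_univ_eq_biUnion_isFacetRel (hspan : Submodule.span ℝ (Set.range (realCol A)) = ⊤)
    (hlow : ∃ c : Fin d → ℝ, ∀ j, c ⬝ᵥ realCol A j ≤ w j) :
    posCone A Finset.univ = ⋃ s ∈ {s | isFacetRel A Finset.univ w s}, posCone A s := by
  refine subset_antisymm ?_ (Set.iUnion₂_subset fun s _ => ?_)
  · have hclosed : IsClosed (⋃ s ∈ {s | isFacetRel A Finset.univ w s}, posCone A s) :=
      (Set.toFinite _).isClosed_biUnion fun s _ => by
        rw [posCone_eq_posHull]; exact isClosed_posHull _ _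
    have hdense := dense_setOf_forall_notMem
      (fun S : {s : Finset (Fin n) // Submodule.span ℝ (realCol A '' s) ≠ ⊤} =>
        Submodule.span ℝ (realCol A '' S.1)) fun S => S.2
    rw [posCone_eq_posHull A Finset.univ]
    refine (convex_posHull.subset_closure_inter_of_dense (interior_posHull_nonempty hspan)
      hdense).trans (closure_minimal ?_ hclosed)
    rintro z ⟨hz, hzgen⟩
    obtain ⟨s, hs, hzs⟩ := exists_isFacetRel_of_generic hlow ((posCone_eq_posHull A _).symm ▸ hz)
      fun s hzs => by_contra fun h => hzgen ⟨s, h⟩ hzs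
    exact Set.mem_biUnion hs hzs
  · rw [posCone_eq_posHull, posCone_eq_posHull]
    exact posHull_mono (Finset.subset_univ s)

theorem exists_generic_heights (A : Matrix (Fin d) (Fin n) ℤ) (τ : Finset (Fin n))
    (w₀ B : Fin n → ℝ) : ∃ w : Fin n → ℝ, (∀ j ∈ τ, w j = w₀ j) ∧ (∀ j ∉ τ, B j < w j) ∧
      ∀ (s : Finset (Fin n)) (c : Fin d → ℝ), (∀ j ∈ s, c ⬝ᵥ realCol A j = w j) →
        ∀ ν : Fin n → ℝ, ∑ j ∈ s, ν j • realCol A j = 0 → ∀ j ∈ s, j ∉ τ → ν j = 0 := by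
  let Dep := {s : Finset (Fin n) //
    ∃ ν : Fin n → ℝ, ∑ j ∈ s, ν j • realCol A j = 0 ∧ ∃ j ∈ s \ τ, ν j ≠ 0}
  choose ν hν j₀ hj₀ hνj₀ using fun S : Dep => S.2
  -- For a relation `ν` on `s`, the height `∑ ν j * w j` is affine in the heights outside `τ`.
  let f : Dep → (Fin n → ℝ) →ₗ[ℝ] ℝ := fun S => ∑ j ∈ S.1 \ τ, ν S j • LinearMap.proj j
  have hf_apply : ∀ S u, f S u = ∑ j ∈ S.1 \ τ, ν S j * u j := fun S u => by simp [f]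
  have hf : ∀ S, f S ≠ 0 := fun S hS => hνj₀ S <| by
    simpa [hf_apply, Pi.single_apply, hj₀ S] using LinearMap.congr_fun hS (Pi.single (j₀ S) 1)
  obtain ⟨u, hu, huB⟩ := (dense_setOf_forall_apply_ne f hf
    fun S => -∑ j ∈ S.1 ∩ τ, ν S j * w₀ j).exists_mem_open (isOpen_setOf_forall_lt B)
      ⟨B + 1, fun j => by simp⟩
  refine ⟨fun j => if j ∈ τ then w₀ j else u j, fun j hj => if_pos hj,
    fun j hj => by simpa [hj] using huB j, fun s c hc ν' hν' j hjs hjτ => ?_⟩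
  beta_reduce at hc
  by_contra hne
  let S : Dep := ⟨s, ν', hν', j, Finset.mem_sdiff.2 ⟨hjs, hjτ⟩, hne⟩
  have h0 : ∑ j ∈ s, ν S j * c ⬝ᵥ realCol A j = 0 := by
    rw [← dotProduct_sum_smul_realCol, hν S, dotProduct_zero]
  rw [← Finset.sum_inter_add_sum_sdiff s τ] at h0
  have hin : ∑ i ∈ s ∩ τ, ν S i * c ⬝ᵥ realCol A i = ∑ i ∈ s ∩ τ, ν S i * w₀ i :=
    Finset.sum_congr rfl fun i hi => by
      rw [hc i (Finset.mem_inter.1 hi).1, if_pos (Finset.mem_inter.1 hi).2]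
  have hout : ∑ i ∈ s \ τ, ν S i * c ⬝ᵥ realCol A i = ∑ i ∈ s \ τ, ν S i * u i :=
    Finset.sum_congr rfl fun i hi => by
      rw [hc i (Finset.mem_sdiff.1 hi).1, if_neg (Finset.mem_sdiff.1 hi).2]
  have huS := hu S
  rw [hf_apply] at huS
  change ∑ i ∈ s \ τ, ν S i * u i ≠ -∑ i ∈ s ∩ τ, ν S i * w₀ i at huS
  exact huS (by linarith)

theorem linearIndepOn_of_memTwRel_univ (hw₀ : isRegTriangRel A τ w₀) (hw : ∀ j ∈ τ, w j = w₀ j)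
    (hgen : ∀ (s : Finset (Fin n)) (c : Fin d → ℝ), (∀ j ∈ s, c ⬝ᵥ realCol A j = w j) →
      ∀ ν : Fin n → ℝ, ∑ j ∈ s, ν j • realCol A j = 0 → ∀ j ∈ s, j ∉ τ → ν j = 0)
    (hs : memTwRel A Finset.univ w s) : LinearIndepOn ℝ (realCol A) (s : Set (Fin n)) := by
  obtain ⟨-, c, hceq, hclt⟩ := memTwRel_iff.1 hs
  have hcell : memTwRel A τ w₀ (s ∩ τ) := by
    refine ⟨Finset.inter_subset_right, c, fun j hj => ?_, fun j hjτ hj => ?_⟩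
    · rw [← hw j (Finset.mem_inter.1 hj).2]; exact hceq j (Finset.mem_inter.1 hj).1
    · rw [← hw j hjτ]
      exact hclt j (Finset.mem_univ j) fun hjs => hj (Finset.mem_inter.2 ⟨hjs, hjτ⟩)
  have hind := linearIndepOn_finset_iff.1 (hw₀.linearIndepOn hcell)
  rw [linearIndepOn_finset_iff]
  intro ν hν j hj
  have hout := hgen s c hceq ν hν
  by_cases hjτ : j ∈ τ
  · refine hind ν ?_ j (Finset.mem_inter.2 ⟨hj, hjτ⟩)
    rw [← hν, ← Finset.sum_inter_add_sum_sdiff s τ, left_eq_add]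
    exact Finset.sum_eq_zero fun i hi => by
      rw [hout i (Finset.mem_sdiff.1 hi).1 (Finset.mem_sdiff.1 hi).2, zero_smul]
  · exact hout j hj hjτ

theorem isFacetRel_univ_of_isFacetRel (hσ : isFacetRel A τ w₀ s) (hw : ∀ j ∈ τ, w j = w₀ j)
    {c : Fin d → ℝ} (hceq : ∀ j ∈ s, c ⬝ᵥ realCol A j = w₀ j)
    (hclt : ∀ j ∈ τ, j ∉ s → c ⬝ᵥ realCol A j < w₀ j) (hout : ∀ j ∉ τ, c ⬝ᵥ realCol A j < w j) :
    isFacetRel A Finset.univ w s := by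
  refine ⟨⟨Finset.subset_univ s, c, fun j hj => ?_, fun j _ hj => ?_⟩, hσ.2⟩
  · rw [hw j (hσ.1.1 hj)]; exact hceq j hj
  · by_cases hjτ : j ∈ τ
    · rw [hw j hjτ]; exact hclt j hjτ hj
    · exact hout j hjτ

end Triangulation

theorem stmt_4_general {d n : ℕ} (A : Matrix (Fin d) (Fin n) ℤ)
    (τ : Finset (Fin n))
    (w₀ : Fin n → ℝ) (hw₀ : isRegTriangRel A τ w₀) :
    ∃ w : Fin n → ℝ, isRegTriangRel A Finset.univ w ∧
      ∀ s : Finset (Fin n), isFacetRel A τ w₀ s → isFacetRel A Finset.univ w s := by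
  obtain ⟨σ₀, hσ₀⟩ := hw₀.exists_isFacetRel
  choose! c hceq hclt using fun σ (hσ : isFacetRel A τ w₀ σ) => (memTwRel_iff.1 hσ.1).2
  obtain ⟨w, hwτ, hwB, hgen⟩ := exists_generic_heights A τ w₀ fun j => ∑ σ, |c σ ⬝ᵥ realCol A j|
  have hout : ∀ σ, ∀ j ∉ τ, c σ ⬝ᵥ realCol A j < w j := fun σ j hj =>
    (le_abs_self _).trans_lt <| (Finset.single_le_sum (fun σ _ => abs_nonneg (c σ ⬝ᵥ realCol A j))
      (Finset.mem_univ σ)).trans_lt (hwB j hj)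
  refine ⟨w, ⟨fun s hs => ?_, posCone_univ_eq_biUnion_isFacetRel ?_ ⟨c σ₀, fun j => ?_⟩⟩,
    fun σ hσ => isFacetRel_univ_of_isFacetRel hσ hwτ (hceq σ hσ) (hclt σ hσ) (hout σ)⟩
  · have hind := linearIndepOn_of_memTwRel_univ hw₀ hwτ hgen hs.1
    exact ⟨card_eq_of_isFacetRel hs hind, hind⟩
  · exact top_unique ((isFacetRel_iff.1 hσ₀).2 ▸ Submodule.span_mono (Set.image_subset_range _ _))
  · by_cases hj : j ∈ τ
    · rw [hwτ j hj]; exact dotProduct_realCol_le (hceq σ₀ hσ₀) (hclt σ₀ hσ₀) hj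
    · exact (hout σ₀ j hj).le

theorem stmt_4 {d n : ℕ} (A : Matrix (Fin d) (Fin n) ℤ)
    (hrank : (A.map (Int.cast : ℤ → ℝ)).rank = d)
    (τ : Finset (Fin n))
    (hτrank : Submodule.span ℝ
        (Set.range fun j : {j // j ∈ τ} => fun i => (A i j.1 : ℝ)) = ⊤)
    (hpointed : ∃ c₀ : Fin d → ℝ, ∀ j ∈ τ, 0 < ∑ i, c₀ i * (A i j : ℝ))
    (w₀ : Fin n → ℝ) (hw₀ : isRegTriangRel A τ w₀) :
    ∃ w : Fin n → ℝ, isRegTriangRel A Finset.univ w ∧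
      ∀ s : Finset (Fin n), isFacetRel A τ w₀ s → isFacetRel A Finset.univ w s :=
  stmt_4_general A τ w₀ hw₀
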